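/- Let t₁, …, t_N be distinct real numbers and let t̂₁, …, t̂_N be distinct real numbers with |t̂ᵢ − tᵢ| ≤ δ for all i ∈ [N], where δ ≥ 0. Define the ranks π(i) = #{ j ∈ [N] : t_j < t_i } and π̂(i) = #{ j ∈ [N] : t̂_j < t̂ᵢ }. Then for every i ∈ [N], |π̂(i) − π(i)| ≤ #{ j ∈ [N] : j ≠ i and |t_j − t_i| ≤ 2δ }. -/

import Mathlib

/-!
An index `j` is counted by one ranking of `i` and not by the other only if the two labelings
order the pair `j, i` differently. Perturbing both labels by at most `δ` moves their difference by
at most `2δ`, so such a sign change forces `|t j - t i| ≤ 2δ` (and `j ≠ i`). The two ranks therefore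
differ by at most the number of such `j`.
-/

open Finset

open scoped symmDiff

theorem Finset.abs_card_sub_card_le_card_symmDiff {α : Type*} [DecidableEq α] (s t : Finset α) :
    |(#s : ℤ) - #t| ≤ #(s ∆ t) := by
  have hs : #s ≤ #(s \ t) + #t := card_le_card_sdiff_add_card
  have ht : #t ≤ #(t \ s) + #s := card_le_card_sdiff_add_card
  have hst : #(s \ t) ≤ #(s ∆ t) := card_le_card (by simp [symmDiff_def])
  have hts : #(t \ s) ≤ #(s ∆ t) := card_le_card (by simp [symmDiff_def])
  rw [abs_le]
  constructor <;> omega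

section OrderFlip

variable {ι α : Type*} [Field α] [LinearOrder α] [IsStrictOrderedRing α]
  {s s' : ι → α} {δ : α}

theorem abs_sub_le_two_mul_of_not_lt_iff_lt (hclose : ∀ k, |s' k - s k| ≤ δ) {i j : ι}
    (hflip : ¬(s' j < s' i ↔ s j < s i)) : |s j - s i| ≤ 2 * δ := by
  have hj := abs_le.mp (hclose j)
  have hi := abs_le.mp (hclose i)
  rw [abs_le]
  rcases lt_or_ge (s j) (s i) with h | h
  · have : s' i ≤ s' j := not_lt.mp fun h' => hflip (iff_of_true h' h)
    constructor <;> linarith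
  · have : s' j < s' i := not_le.mp fun h' => hflip (iff_of_false h'.not_gt h.not_gt)
    constructor <;> linarith

theorem symmDiff_filter_lt_subset [Fintype ι] [DecidableEq ι]
    (hclose : ∀ k, |s' k - s k| ≤ δ) (i : ι) :
    univ.filter (fun j => s' j < s' i) ∆ univ.filter (fun j => s j < s i) ⊆
      univ.filter fun j => j ≠ i ∧ |s j - s i| ≤ 2 * δ := by
  intro j hj
  have hflip : ¬(s' j < s' i ↔ s j < s i) := by
    simp only [mem_symmDiff, mem_filter, mem_univ, true_and] at hj
    tauto
  simp only [mem_filter, mem_univ, true_and]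
  exact ⟨by rintro rfl; exact hflip (iff_of_false (lt_irrefl _) (lt_irrefl _)),
    abs_sub_le_two_mul_of_not_lt_iff_lt hclose hflip⟩

end OrderFlip

theorem rank_stability_general
    {N : ℕ} (t that : Fin N → ℝ)
    (δ : ℝ)
    (hclose : ∀ i, |that i - t i| ≤ δ) (i : Fin N) :
    |((Finset.univ.filter fun j => that j < that i).card : ℤ)
        - ((Finset.univ.filter fun j => t j < t i).card : ℤ)|
      ≤ ((Finset.univ.filter fun j => j ≠ i ∧ |t j - t i| ≤ 2 * δ).card : ℤ) :=
  (abs_card_sub_card_le_card_symmDiff _ _).trans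
    (mod_cast card_le_card (symmDiff_filter_lt_subset hclose i))

/-- Rank stability: if each estimated label `t̂ᵢ` is within `δ` of the true
label `tᵢ` (all labels distinct), then the rank of `i` under the estimated
labels differs from its true rank by at most the number of other true labels
within distance `2δ` of `tᵢ`. -/
theorem rank_stability
    {N : ℕ} (t that : Fin N → ℝ)
    (ht : Function.Injective t) (hthat : Function.Injective that)
    (δ : ℝ) (hδ : 0 ≤ δ)
    (hclose : ∀ i, |that i - t i| ≤ δ) (i : Fin N) :
    |((Finset.univ.filter fun j => that j < that i).card : ℤ)
        - ((Finset.univ.filter fun j => t j < t i).card : ℤ)|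
      ≤ ((Finset.univ.filter fun j => j ≠ i ∧ |t j - t i| ≤ 2 * δ).card : ℤ) :=
  rank_stability_general t that δ hclose i
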